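/- (i) For every K ∈ 𝒜_ℒ⁰, the map B ↦ π^p_*(B|K) is a totally monotone capacity on 𝒜_ℒ. (ii) For every F ∈ 𝒜_ℒ and K ∈ 𝒜_ℒ⁰: π^p_*(F|K) = 1 if F ∩ K = K; if F ∩ K ≠ K, then π^p_*(F|K) = π(F ∩ K)/π(K) when π(K) > 0, and π^p_*(F|K) = 0 when π(K) = 0. -/

import Mathlib

/-!
If `π K > 0`, condition (C3) with `Ω` as conditioning event forces `P(F|K) = π(F ∩ K) / π K`
for every `P ∈ 𝒫`, and if `K ⊆ F`, (C1) and (C2) force `P(F|K) = 1`. In the remaining case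
(`π K = 0`, `K ⊄ F`) some `P ∈ 𝒫` has `P(F|K) = 0`. To build it, Hahn–Banach applied to the upper
`π`-integral of bounded functions on the blocks gives a finitely additive `μ` on `𝒜` extending
`π` with `μ(F ∩ H i) = σ(F|H i) π(H i)`. Conditioning lexicographically on `μ`, then on
`σ(·|H i)` for a coherently chosen block `H i` meeting the condition, then on a point mass, gives
a full conditional probability in `𝒫`; choosing first a block `H i ⊆ K \ F` makes
`P(F|K) = σ(F|H i) = 0`. So the lower envelope is `π(·|K)` when `π K > 0` and the unanimity game
of `K` otherwise, and both are totally monotone, the first by inclusion–exclusion.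
-/

open Set

open scoped Classical

variable {Ω : Type*}

/-- A field of sets on `Ω`: contains `univ`, closed under complements and finite unions. -/
def IsSetField (𝒜 : Set (Set Ω)) : Prop :=
  Set.univ ∈ 𝒜 ∧ (∀ A ∈ 𝒜, Aᶜ ∈ 𝒜) ∧ ∀ A ∈ 𝒜, ∀ B ∈ 𝒜, A ∪ B ∈ 𝒜

/-- A finitely additive probability on the field `𝒜`. -/
def IsFAP (𝒜 : Set (Set Ω)) (P : Set Ω → ℝ) : Prop :=
  (∀ A ∈ 𝒜, 0 ≤ P A ∧ P A ≤ 1) ∧ P Set.univ = 1 ∧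
    ∀ A ∈ 𝒜, ∀ B ∈ 𝒜, Disjoint A B → P (A ∪ B) = P A + P B

/-- A partition of `Ω` into nonempty pairwise disjoint pieces. -/
def IsPartition {ι : Type*} (H : ι → Set Ω) : Prop :=
  (∀ i, (H i).Nonempty) ∧ (Pairwise fun i j => Disjoint (H i) (H j)) ∧
    (⋃ i, H i) = Set.univ

/-- A field containing every member of the partition `H` and whose members are
unions of members of the partition. -/
def IsFieldOver {ι : Type*} (H : ι → Set Ω) (𝒜L : Set (Set Ω)) : Prop :=
  IsSetField 𝒜L ∧ (∀ i, H i ∈ 𝒜L) ∧ ∀ A ∈ 𝒜L, ∃ S : Set ι, A = ⋃ i ∈ S, H i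

/-- A field containing `𝒜L ∪ 𝒜E` whose members are unions of the atoms `H i ∩ E j`. -/
def IsJointField {ι κ : Type*} (H : ι → Set Ω) (E : κ → Set Ω)
    (𝒜L 𝒜E 𝒜 : Set (Set Ω)) : Prop :=
  IsSetField 𝒜 ∧ 𝒜L ⊆ 𝒜 ∧ 𝒜E ⊆ 𝒜 ∧
    ∀ A ∈ 𝒜, ∃ S : Set (ι × κ), A = ⋃ p ∈ S, H p.1 ∩ E p.2

/-- A strategy on `𝒜 × ℒ`: each `σ (·|H i)` is a finitely additive probability on `𝒜`
equal to `1` on events implied by `H i`. -/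
def IsStrategy {ι : Type*} (𝒜 : Set (Set Ω)) (H : ι → Set Ω) (σ : Set Ω → ι → ℝ) : Prop :=
  ∀ i, IsFAP 𝒜 (fun F => σ F i) ∧ ∀ F ∈ 𝒜, H i ⊆ F → σ F i = 1

/-- A full conditional probability on the field `𝒜` (conditions (C1), (C2), (C3)). -/
def IsFCP (𝒜 : Set (Set Ω)) (P : Set Ω → Set Ω → ℝ) : Prop :=
  (∀ E ∈ 𝒜, ∀ K ∈ 𝒜, K.Nonempty → P E K = P (E ∩ K) K) ∧
  (∀ K ∈ 𝒜, K.Nonempty → IsFAP 𝒜 fun E => P E K) ∧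
  ∀ E ∈ 𝒜, ∀ F ∈ 𝒜, ∀ K ∈ 𝒜, K.Nonempty → (E ∩ K).Nonempty →
    P (E ∩ F) K = P E K * P F (E ∩ K)

/-- `P` extends the prior `π` on `𝒜L` and the strategy `σ` on `𝒜 × ℒ`. -/
def ExtendsPriorStrategy {ι : Type*} (𝒜 𝒜L : Set (Set Ω)) (H : ι → Set Ω)
    (π : Set Ω → ℝ) (σ : Set Ω → ι → ℝ) (P : Set Ω → Set Ω → ℝ) : Prop :=
  (∀ B ∈ 𝒜L, P B Set.univ = π B) ∧ ∀ F ∈ 𝒜, ∀ i, P F (H i) = σ F i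

/-- The set `𝒫` of full conditional probabilities on `𝒜` extending `{π, σ}`. -/
def FCPSet {ι : Type*} (𝒜 𝒜L : Set (Set Ω)) (H : ι → Set Ω)
    (π : Set Ω → ℝ) (σ : Set Ω → ι → ℝ) : Set (Set Ω → Set Ω → ℝ) :=
  {P | IsFCP 𝒜 P ∧ ExtendsPriorStrategy 𝒜 𝒜L H π σ P}

/-- Lower envelope of a set of conditional probabilities at `F|K`. -/
noncomputable def lowEnv (Ps : Set (Set Ω → Set Ω → ℝ)) (F K : Set Ω) : ℝ :=
  sInf ((fun P => P F K) '' Ps)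

/-- Upper envelope of a set of conditional probabilities at `F|K`. -/
noncomputable def upEnv (Ps : Set (Set Ω → Set Ω → ℝ)) (F K : Set Ω) : ℝ :=
  sSup ((fun P => P F K) '' Ps)

/-- A finite partition of `Ω` contained in `𝒜L`. -/
def IsFinPart (𝒜L : Set (Set Ω)) (T : Finset (Set Ω)) : Prop :=
  (↑T : Set (Set Ω)) ⊆ 𝒜L ∧ (∀ A ∈ T, (A : Set Ω).Nonempty) ∧
    (∀ A ∈ T, ∀ B ∈ T, A ≠ B → Disjoint A B) ∧ ⋃₀ (↑T : Set (Set Ω)) = Set.univ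

/-- Lower Stieltjes integral of `X : ℒ → ℝ` with respect to `μ` on `𝒜L`. -/
noncomputable def lowerSInt {ι : Type*} (H : ι → Set Ω) (𝒜L : Set (Set Ω))
    (X : ι → ℝ) (μ : Set Ω → ℝ) : ℝ :=
  sSup {x | ∃ T : Finset (Set Ω), IsFinPart 𝒜L T ∧
    x = ∑ A ∈ T, sInf {y | ∃ i, H i ⊆ A ∧ y = X i} * μ A}

/-- Upper Stieltjes integral of `X : ℒ → ℝ` with respect to `μ` on `𝒜L`. -/
noncomputable def upperSInt {ι : Type*} (H : ι → Set Ω) (𝒜L : Set (Set Ω))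
    (X : ι → ℝ) (μ : Set Ω → ℝ) : ℝ :=
  sInf {x | ∃ T : Finset (Set Ω), IsFinPart 𝒜L T ∧
    x = ∑ A ∈ T, sSup {y | ∃ i, H i ⊆ A ∧ y = X i} * μ A}

/-- `𝒜L`-continuity of a bounded function `X : ℒ → ℝ`. -/
def ALContinuous {ι : Type*} (H : ι → Set Ω) (𝒜L : Set (Set Ω)) (X : ι → ℝ) : Prop :=
  (∃ M : ℝ, ∀ i, |X i| ≤ M) ∧ ∀ t : ℝ, ∀ ε > (0 : ℝ), ∃ A ∈ 𝒜L,
    (⋃ i ∈ {i | t + ε ≤ X i}, H i) ⊆ A ∧ A ⊆ ⋃ i ∈ {i | t ≤ X i}, H i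

/-- Countable additivity of `P` on the field `𝒜`. -/
def CountablyAdditiveOn (𝒜 : Set (Set Ω)) (P : Set Ω → ℝ) : Prop :=
  ∀ A : ℕ → Set Ω, (∀ n, A n ∈ 𝒜) → (Pairwise fun m n => Disjoint (A m) (A n)) →
    (⋃ n, A n) ∈ 𝒜 → HasSum (fun n => P (A n)) (P (⋃ n, A n))

/-- A (normalized) capacity on the field `𝒜`. -/
def IsCapacity (𝒜 : Set (Set Ω)) (φ : Set Ω → ℝ) : Prop :=
  φ ∅ = 0 ∧ φ Set.univ = 1 ∧ (∀ A ∈ 𝒜, 0 ≤ φ A ∧ φ A ≤ 1) ∧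
    ∀ A ∈ 𝒜, ∀ B ∈ 𝒜, A ⊆ B → φ A ≤ φ B

/-- Total monotonicity of a capacity `φ` on the field `𝒜`. -/
def TotallyMonotone (𝒜 : Set (Set Ω)) (φ : Set Ω → ℝ) : Prop :=
  ∀ n : ℕ, 2 ≤ n → ∀ A : Fin n → Set Ω, (∀ i, A i ∈ 𝒜) →
    ∑ s ∈ Finset.univ.powerset.filter (fun s : Finset (Fin n) => s.Nonempty),
      (-1 : ℝ) ^ (s.card - 1) * φ (⋂ i ∈ s, A i) ≤ φ (⋃ i, A i)

/-- Restriction of a conditional probability to the domain `𝒜 × ℬ⁰`, viewed as a point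
of the product space `ℝ^(𝒜 × ℬ⁰)`. -/
def restrictPairs (𝒜 ℬ : Set (Set Ω)) (Q : Set Ω → Set Ω → ℝ)
    (p : {p : Set Ω × Set Ω // p.1 ∈ 𝒜 ∧ p.2 ∈ ℬ ∧ p.2.Nonempty}) : ℝ :=
  Q p.val.1 p.val.2

/-- Restriction of a set function to the domain `𝒜`, viewed as a point of `ℝ^𝒜`. -/
def restrictDom (𝒜 : Set (Set Ω)) (μ : Set Ω → ℝ) (A : {A : Set Ω // A ∈ 𝒜}) : ℝ :=
  μ A.val

/-- The field of all unions of members of the partition `H`, i.e. `⟨ℒ⟩*`. -/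
def unionsOf {ι : Type*} (H : ι → Set Ω) : Set (Set Ω) :=
  {A | ∃ S : Set ι, A = ⋃ i ∈ S, H i}

/-- The set `𝒬^fd` of fully ℒ-disintegrable full conditional probabilities on `𝒜`
extending `{π, σ}`. -/
def QfdSet {ι : Type*} (𝒜 𝒜L : Set (Set Ω)) (H : ι → Set Ω)
    (π : Set Ω → ℝ) (σ : Set Ω → ι → ℝ) : Set (Set Ω → Set Ω → ℝ) :=
  {Q | IsFCP 𝒜 Q ∧ ExtendsPriorStrategy 𝒜 𝒜L H π σ Q ∧
    ∀ F ∈ 𝒜, ∀ K ∈ 𝒜L, K.Nonempty →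
      Q F K = lowerSInt H 𝒜L (fun i => σ F i) fun B => Q B K}

/-- The set `𝒬^fsc` of fully strongly ℒ-conglomerable full conditional probabilities
on `𝒜` extending `{π, σ}`. -/
def QfscSet {ι : Type*} (𝒜 𝒜L : Set (Set Ω)) (H : ι → Set Ω)
    (π : Set Ω → ℝ) (σ : Set Ω → ι → ℝ) : Set (Set Ω → Set Ω → ℝ) :=
  {Q | IsFCP 𝒜 Q ∧ ExtendsPriorStrategy 𝒜 𝒜L H π σ Q ∧
    ∀ F ∈ 𝒜, ∀ K ∈ 𝒜L, K.Nonempty → ∀ B ∈ 𝒜L, B.Nonempty → B ⊆ K →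
      Q B K * sInf {x | ∃ i, H i ⊆ B ∧ x = σ F i} ≤ Q (F ∩ B) K ∧
      Q (F ∩ B) K ≤ Q B K * sSup {x | ∃ i, H i ⊆ B ∧ x = σ F i}}

/-- The set `𝒫^sc` of strongly ℒ-conglomerable joint probabilities consistent with `{π, σ}`. -/
def PscSet {ι : Type*} (𝒜 𝒜L : Set (Set Ω)) (H : ι → Set Ω)
    (π : Set Ω → ℝ) (σ : Set Ω → ι → ℝ) : Set (Set Ω → ℝ) :=
  {μ | (∃ P ∈ FCPSet 𝒜 𝒜L H π σ, μ = fun F => P F Set.univ) ∧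
    ∀ F ∈ 𝒜, ∀ B ∈ 𝒜L, B.Nonempty →
      π B * sInf {x | ∃ i, H i ⊆ B ∧ x = σ F i} ≤ μ (F ∩ B) ∧
      μ (F ∩ B) ≤ π B * sSup {x | ∃ i, H i ⊆ B ∧ x = σ F i}}

/-- The set `𝒫^fd` of fully ℒ-disintegrable conditional probabilities on `𝒜 × 𝒜L⁰`
extending `{π, σ}`. -/
def PfdSet {ι : Type*} (𝒜 𝒜L : Set (Set Ω)) (H : ι → Set Ω)
    (π : Set Ω → ℝ) (σ : Set Ω → ι → ℝ) : Set (Set Ω → Set Ω → ℝ) :=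
  {P | (∀ E ∈ 𝒜, ∀ K ∈ 𝒜L, K.Nonempty → P E K = P (E ∩ K) K) ∧
    (∀ K ∈ 𝒜L, K.Nonempty → IsFAP 𝒜 fun E => P E K) ∧
    (∀ E ∈ 𝒜, ∀ F ∈ 𝒜, ∀ K ∈ 𝒜L, K.Nonempty → E ∩ K ∈ 𝒜L → (E ∩ K).Nonempty →
      P (E ∩ F) K = P E K * P F (E ∩ K)) ∧
    (∀ B ∈ 𝒜L, P B Set.univ = π B) ∧ (∀ F ∈ 𝒜, ∀ i, P F (H i) = σ F i) ∧
    ∀ F ∈ 𝒜, ∀ K ∈ 𝒜L, K.Nonempty →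
      P F K = lowerSInt H 𝒜L (fun i => σ F i) fun B => P B K}

/-- The Choquet integral `C∫ X dφ = ∫₀¹ φ₊((X ≥ t)) dt` of a `[0,1]`-valued `X : ℒ → ℝ`
with respect to a capacity `φ` on `𝒜L`, where `φ₊` is the inner extension of `φ`. -/
noncomputable def choquetInt {ι : Type*} (H : ι → Set Ω) (𝒜L : Set (Set Ω))
    (X : ι → ℝ) (φ : Set Ω → ℝ) : ℝ :=
  ∫ t in (0 : ℝ)..(1 : ℝ),
    sSup {y | ∃ B ∈ 𝒜L, B ⊆ (⋃ i ∈ {i | t ≤ X i}, H i) ∧ y = φ B}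

section

open Function

variable {ι α γ : Type*}

namespace IsSetField

variable {𝒜 : Set (Set Ω)}

lemma compl_mem (h : IsSetField 𝒜) {A : Set Ω} (hA : A ∈ 𝒜) : Aᶜ ∈ 𝒜 := h.2.1 A hA

lemma union_mem (h : IsSetField 𝒜) {A B : Set Ω} (hA : A ∈ 𝒜) (hB : B ∈ 𝒜) : A ∪ B ∈ 𝒜 :=
  h.2.2 A hA B hB

lemma empty_mem (h : IsSetField 𝒜) : (∅ : Set Ω) ∈ 𝒜 := by
  simpa using h.compl_mem h.1

lemma inter_mem (h : IsSetField 𝒜) {A B : Set Ω} (hA : A ∈ 𝒜) (hB : B ∈ 𝒜) : A ∩ B ∈ 𝒜 := by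
  simpa [compl_union] using h.compl_mem (h.union_mem (h.compl_mem hA) (h.compl_mem hB))

lemma biUnion_mem (h : IsSetField 𝒜) (s : Finset γ) {A : γ → Set Ω} (hA : ∀ j ∈ s, A j ∈ 𝒜) :
    ⋃ j ∈ s, A j ∈ 𝒜 := by
  induction s using Finset.induction_on with
  | empty => simpa using h.empty_mem
  | insert a s _ ih =>
    rw [Finset.set_biUnion_insert]
    exact h.union_mem (hA a (by simp)) (ih fun j hj => hA j (by simp [hj]))

lemma biInter_mem (h : IsSetField 𝒜) (s : Finset γ) {A : γ → Set Ω} (hA : ∀ j ∈ s, A j ∈ 𝒜) :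
    ⋂ j ∈ s, A j ∈ 𝒜 := by
  simpa [compl_iUnion₂] using
    h.compl_mem (h.biUnion_mem s fun j hj => h.compl_mem (hA j hj))

lemma iUnion_mem [Fintype γ] (h : IsSetField 𝒜) {A : γ → Set Ω} (hA : ∀ j, A j ∈ 𝒜) :
    ⋃ j, A j ∈ 𝒜 := by
  simpa using h.biUnion_mem Finset.univ fun j _ => hA j

end IsSetField

namespace IsFAP

variable {𝒜 : Set (Set Ω)} {φ : Set Ω → ℝ}

lemma nonneg (h : IsFAP 𝒜 φ) {A : Set Ω} (hA : A ∈ 𝒜) : 0 ≤ φ A := (h.1 A hA).1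

lemma le_one (h : IsFAP 𝒜 φ) {A : Set Ω} (hA : A ∈ 𝒜) : φ A ≤ 1 := (h.1 A hA).2

lemma apply_univ (h : IsFAP 𝒜 φ) : φ univ = 1 := h.2.1

lemma apply_union (h : IsFAP 𝒜 φ) {A B : Set Ω} (hA : A ∈ 𝒜) (hB : B ∈ 𝒜)
    (hAB : Disjoint A B) : φ (A ∪ B) = φ A + φ B := h.2.2 A hA B hB hAB

lemma apply_inter_add_apply_inter_compl (h : IsFAP 𝒜 φ) (h𝒜 : IsSetField 𝒜) {X A : Set Ω}
    (hX : X ∈ 𝒜) (hA : A ∈ 𝒜) : φ (X ∩ A) + φ (X ∩ Aᶜ) = φ X := by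
  rw [← h.apply_union (h𝒜.inter_mem hX hA) (h𝒜.inter_mem hX (h𝒜.compl_mem hA))
    (disjoint_compl_right.mono inter_subset_right inter_subset_right), inter_union_compl]

lemma apply_empty (h : IsFAP 𝒜 φ) (h𝒜 : IsSetField 𝒜) : φ ∅ = 0 := by
  have := h.apply_union h𝒜.empty_mem h𝒜.empty_mem (disjoint_empty _)
  simp only [union_empty] at this
  linarith

lemma mono (h : IsFAP 𝒜 φ) (h𝒜 : IsSetField 𝒜) {A B : Set Ω} (hA : A ∈ 𝒜) (hB : B ∈ 𝒜)
    (hAB : A ⊆ B) : φ A ≤ φ B := by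
  have := h.apply_inter_add_apply_inter_compl h𝒜 hB hA
  rw [inter_eq_right.2 hAB] at this
  linarith [h.nonneg (h𝒜.inter_mem hB (h𝒜.compl_mem hA))]

lemma apply_compl (h : IsFAP 𝒜 φ) (h𝒜 : IsSetField 𝒜) {A : Set Ω} (hA : A ∈ 𝒜) :
    φ Aᶜ = 1 - φ A := by
  have := h.apply_inter_add_apply_inter_compl h𝒜 h𝒜.1 hA
  rw [univ_inter, univ_inter, h.apply_univ] at this
  linarith

lemma apply_eq_zero_of_subset_compl (h : IsFAP 𝒜 φ) (h𝒜 : IsSetField 𝒜) {C F : Set Ω}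
    (hC : C ∈ 𝒜) (hF : F ∈ 𝒜) (hC1 : φ C = 1) (hFC : F ⊆ Cᶜ) : φ F = 0 := by
  have := h.mono h𝒜 hF (h𝒜.compl_mem hC) hFC
  rw [h.apply_compl h𝒜 hC, hC1] at this
  linarith [h.nonneg hF]

lemma apply_inter_of_apply_eq_one (h : IsFAP 𝒜 φ) (h𝒜 : IsSetField 𝒜) {C F : Set Ω}
    (hC : C ∈ 𝒜) (hF : F ∈ 𝒜) (hC1 : φ C = 1) : φ (F ∩ C) = φ F := by
  rw [← h.apply_inter_add_apply_inter_compl h𝒜 hF hC, h.apply_eq_zero_of_subset_compl h𝒜 hC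
    (h𝒜.inter_mem hF (h𝒜.compl_mem hC)) hC1 inter_subset_right, add_zero]

lemma apply_biUnion (h : IsFAP 𝒜 φ) (h𝒜 : IsSetField 𝒜) (s : Finset γ) {A : γ → Set Ω}
    (hA : ∀ j ∈ s, A j ∈ 𝒜) (hdisj : (s : Set γ).PairwiseDisjoint A) :
    φ (⋃ j ∈ s, A j) = ∑ j ∈ s, φ (A j) := by
  induction s using Finset.induction_on with
  | empty => simpa using h.apply_empty h𝒜
  | insert a s ha ih =>
    rw [Finset.set_biUnion_insert, Finset.sum_insert ha, h.apply_union (hA a (by simp))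
      (h𝒜.biUnion_mem s fun j hj => hA j (by simp [hj])), ih (fun j hj => hA j (by simp [hj]))
      (hdisj.subset (by simp))]
    refine disjoint_iUnion₂_right.2 fun j hj => hdisj (by simp) (by simp [hj]) ?_
    rintro rfl
    exact ha hj

lemma sum_apply_eq_one [Fintype γ] (h : IsFAP 𝒜 φ) (h𝒜 : IsSetField 𝒜) {A : γ → Set Ω}
    (hA : ∀ j, A j ∈ 𝒜) (hdisj : Pairwise (Disjoint on A)) (hcover : ⋃ j, A j = univ) :
    ∑ j, φ (A j) = 1 := by
  rw [← h.apply_biUnion h𝒜 Finset.univ (fun j _ => hA j) (fun i _ j _ hij => hdisj hij)]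
  simpa [hcover] using h.apply_univ

lemma cond (h : IsFAP 𝒜 φ) (h𝒜 : IsSetField 𝒜) {K : Set Ω} (hK : K ∈ 𝒜) (hφK : 0 < φ K) :
    IsFAP 𝒜 fun F => φ (F ∩ K) / φ K := by
  refine ⟨fun A hA => ⟨?_, ?_⟩, by simp [hφK.ne'], fun A hA B hB hAB => ?_⟩
  · exact div_nonneg (h.nonneg (h𝒜.inter_mem hA hK)) hφK.le
  · exact div_le_one_of_le₀ (h.mono h𝒜 (h𝒜.inter_mem hA hK) hK inter_subset_right) hφK.le
  · dsimp only
    rw [union_inter_distrib_right, h.apply_union (h𝒜.inter_mem hA hK) (h𝒜.inter_mem hB hK)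
      (hAB.mono inter_subset_left inter_subset_left), add_div]

end IsFAP

lemma IsFieldOver.exists_subset {H : ι → Set Ω} {𝒜L : Set (Set Ω)} (h : IsFieldOver H 𝒜L)
    {A : Set Ω} (hA : A ∈ 𝒜L) (hne : A.Nonempty) : ∃ i, H i ⊆ A := by
  obtain ⟨S, rfl⟩ := h.2.2 A hA
  obtain ⟨x, hx⟩ := hne
  obtain ⟨i, hiS, -⟩ := mem_iUnion₂.1 hx
  exact ⟨i, subset_biUnion_of_mem hiS⟩

lemma IsPartition.exists_mem {H : ι → Set Ω} (hH : IsPartition H) (x : Ω) : ∃ i, x ∈ H i :=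
  mem_iUnion.1 (hH.2.2.symm ▸ mem_univ x)

lemma sum_nonempty_neg_one_pow (s : Finset γ) (g : Finset γ → ℝ) :
    ∑ t ∈ s.powerset.filter (fun t => t.Nonempty), (-1 : ℝ) ^ (t.card - 1) * g t =
      g ∅ - ∑ t ∈ s.powerset, (-1 : ℝ) ^ t.card * g t := by
  rw [← Finset.sum_filter_add_sum_filter_not s.powerset (fun t => t.Nonempty)]
  have hempty : s.powerset.filter (fun t => ¬ t.Nonempty) = {∅} := by
    ext t
    simp only [Finset.mem_filter, Finset.mem_powerset, Finset.not_nonempty_iff_eq_empty,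
      Finset.mem_singleton]
    exact ⟨And.right, fun ht => ⟨ht ▸ Finset.empty_subset s, ht⟩⟩
  have hsign : ∀ t ∈ s.powerset.filter (fun t => t.Nonempty),
      (-1 : ℝ) ^ (t.card - 1) * g t = -((-1 : ℝ) ^ t.card * g t) := by
    intro t ht
    obtain ⟨n, hn⟩ := Nat.exists_eq_add_one_of_ne_zero (Finset.mem_filter.1 ht).2.card_pos.ne'
    rw [hn, Nat.add_sub_cancel, pow_succ]
    ring
  rw [hempty, Finset.sum_singleton, Finset.card_empty, pow_zero, one_mul,
    Finset.sum_congr rfl hsign, Finset.sum_neg_distrib]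
  ring

/-- Inclusion–exclusion, in the form obtained by expanding `∏ j ∈ s, (1 - 1_{A j})`. -/
lemma apply_biInter_compl_eq_sum {𝒜 : Set (Set Ω)} (h𝒜 : IsSetField 𝒜) (s : Finset γ)
    {A : γ → Set Ω} (hA : ∀ j ∈ s, A j ∈ 𝒜) (φ : Set Ω → ℝ)
    (hφ : ∀ X ∈ 𝒜, ∀ B ∈ 𝒜, φ (X ∩ B) + φ (X ∩ Bᶜ) = φ X) :
    φ (⋂ j ∈ s, (A j)ᶜ) = ∑ t ∈ s.powerset, (-1 : ℝ) ^ t.card * φ (⋂ j ∈ t, A j) := by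
  induction s using Finset.induction_on generalizing φ with
  | empty => simp
  | insert a s ha ih =>
    have hAa : A a ∈ 𝒜 := hA a (by simp)
    have hAs : ∀ j ∈ s, A j ∈ 𝒜 := fun j hj => hA j (by simp [hj])
    have hrestrict : ∀ X ∈ 𝒜, ∀ B ∈ 𝒜,
        φ (X ∩ B ∩ A a) + φ (X ∩ Bᶜ ∩ A a) = φ (X ∩ A a) := by
      intro X hX B hB
      rw [← hφ (X ∩ A a) (h𝒜.inter_mem hX hAa) B hB, inter_right_comm X B,
        inter_right_comm X Bᶜ]
    have hsplit := hφ _ (h𝒜.biInter_mem s fun j hj => h𝒜.compl_mem (hAs j hj)) (A a) hAa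
    rw [Finset.set_biInter_insert, Finset.sum_powerset_insert ha, inter_comm,
      ← ih hAs φ hφ, ← sub_eq_of_eq_add' hsplit.symm,
      ih hAs (fun X => φ (X ∩ A a)) hrestrict, sub_eq_add_neg, ← Finset.sum_neg_distrib]
    congr 1
    refine Finset.sum_congr rfl fun t ht => ?_
    have hat : a ∉ t := fun h => ha (Finset.mem_powerset.1 ht h)
    rw [Finset.card_insert_of_notMem hat, Finset.set_biInter_insert, pow_succ, inter_comm]
    ring

lemma IsFAP.apply_biUnion_eq_sum {𝒜 : Set (Set Ω)} {φ : Set Ω → ℝ} (h : IsFAP 𝒜 φ)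
    (h𝒜 : IsSetField 𝒜) (s : Finset γ) {A : γ → Set Ω} (hA : ∀ j ∈ s, A j ∈ 𝒜) :
    φ (⋃ j ∈ s, A j) = ∑ t ∈ s.powerset.filter (fun t => t.Nonempty),
      (-1 : ℝ) ^ (t.card - 1) * φ (⋂ j ∈ t, A j) := by
  rw [sum_nonempty_neg_one_pow, ← apply_biInter_compl_eq_sum h𝒜 s hA φ
      fun X hX B hB => h.apply_inter_add_apply_inter_compl h𝒜 hX hB, ← compl_iUnion₂,
    h.apply_compl h𝒜 (h𝒜.biUnion_mem s hA)]
  simp [h.apply_univ]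

lemma IsFAP.totallyMonotone {𝒜 : Set (Set Ω)} {φ : Set Ω → ℝ} (h : IsFAP 𝒜 φ)
    (h𝒜 : IsSetField 𝒜) : TotallyMonotone 𝒜 φ := by
  intro n _ A hA
  rw [← h.apply_biUnion_eq_sum h𝒜 Finset.univ fun j _ => hA j]
  simp

lemma IsFAP.isCapacity {𝒜 : Set (Set Ω)} {φ : Set Ω → ℝ} (h : IsFAP 𝒜 φ)
    (h𝒜 : IsSetField 𝒜) : IsCapacity 𝒜 φ :=
  ⟨h.apply_empty h𝒜, h.apply_univ, h.1, fun _ hA _ hB hAB => h.mono h𝒜 hA hB hAB⟩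

noncomputable def unanimity (K F : Set Ω) : ℝ := if K ⊆ F then 1 else 0

lemma unanimity_nonneg (K F : Set Ω) : 0 ≤ unanimity K F := by
  unfold unanimity
  split_ifs <;> norm_num

lemma isCapacity_unanimity {𝒜 : Set (Set Ω)} {K : Set Ω} (hK : K.Nonempty) :
    IsCapacity 𝒜 (unanimity K) := by
  refine ⟨by simp [unanimity, hK.ne_empty], by simp [unanimity],
    fun A _ => ⟨unanimity_nonneg K A, ?_⟩, fun A _ B _ hAB => ?_⟩
  · unfold unanimity
    split_ifs <;> norm_num
  · by_cases hA : K ⊆ A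
    · simp [unanimity, hA, hA.trans hAB]
    · simpa [unanimity, hA] using unanimity_nonneg K B

lemma totallyMonotone_unanimity (𝒜 : Set (Set Ω)) (K : Set Ω) :
    TotallyMonotone 𝒜 (unanimity K) := by
  intro n _ A _
  set S := Finset.univ.filter fun i => K ⊆ A i
  have hsum : ∑ t ∈ (Finset.univ : Finset (Fin n)).powerset,
      (-1 : ℝ) ^ t.card * unanimity K (⋂ i ∈ t, A i) = if S = ∅ then 1 else 0 := by
    have hsub : ∀ t : Finset (Fin n), unanimity K (⋂ i ∈ t, A i) = if t ⊆ S then 1 else 0 := by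
      intro t
      simp [unanimity, S, Finset.subset_iff]
    simp_rw [hsub, mul_ite, mul_one, mul_zero]
    rw [← Finset.sum_filter]
    have hfilter : (Finset.univ : Finset (Fin n)).powerset.filter (· ⊆ S) = S.powerset := by
      ext t
      simp
    rw [hfilter]
    exact_mod_cast Finset.sum_powerset_neg_one_pow_card
  rw [sum_nonempty_neg_one_pow, hsum]
  by_cases hS : S = ∅
  · simpa [hS, unanimity] using unanimity_nonneg K (⋃ i, A i)
  · obtain ⟨i, hi⟩ := Finset.nonempty_of_ne_empty hS
    have hKU : K ⊆ ⋃ i, A i := (Finset.mem_filter.1 hi).2.trans (subset_iUnion A i)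
    simp [hS, unanimity, hKU]

lemma IsCapacity.congr {𝒜 : Set (Set Ω)} (h𝒜 : IsSetField 𝒜) {φ ψ : Set Ω → ℝ}
    (h : IsCapacity 𝒜 φ) (hφψ : ∀ A ∈ 𝒜, φ A = ψ A) : IsCapacity 𝒜 ψ := by
  refine ⟨?_, ?_, fun A hA => ?_, fun A hA B hB hAB => ?_⟩
  · rw [← hφψ _ h𝒜.empty_mem]; exact h.1
  · rw [← hφψ _ h𝒜.1]; exact h.2.1
  · rw [← hφψ A hA]; exact h.2.2.1 A hA
  · rw [← hφψ A hA, ← hφψ B hB]; exact h.2.2.2 A hA B hB hAB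

lemma TotallyMonotone.congr {𝒜 : Set (Set Ω)} (h𝒜 : IsSetField 𝒜) {φ ψ : Set Ω → ℝ}
    (h : TotallyMonotone 𝒜 φ) (hφψ : ∀ A ∈ 𝒜, φ A = ψ A) : TotallyMonotone 𝒜 ψ := by
  intro n hn A hA
  rw [← hφψ _ (h𝒜.iUnion_mem hA)]
  refine le_of_eq_of_le (Finset.sum_congr rfl fun t _ => ?_) (h n hn A hA)
  rw [hφψ _ (h𝒜.biInter_mem t fun i _ => hA i)]

structure CoherentChoice (α : Type*) where
  pick : Set α → α
  pick_mem : ∀ {S : Set α}, S.Nonempty → pick S ∈ S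
  pick_eq : ∀ {S T : Set α}, T ⊆ S → pick S ∈ T → pick T = pick S

namespace CoherentChoice

noncomputable def ofWellOrder (α : Type*) [Nonempty α] : CoherentChoice α :=
  letI := IsWellOrder.linearOrder (WellOrderingRel (α := α))
  haveI : WellFoundedLT α := ⟨WellOrderingRel.isWellOrder.wf⟩
  { pick := fun S => if h : S.Nonempty then wellFounded_lt.min S h else Classical.arbitrary α
    pick_mem := fun hS => by simpa [hS] using wellFounded_lt.min_mem _ hS
    pick_eq := fun {S T} hTS hT => by
      have hS : S.Nonempty := ⟨_, hTS hT⟩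
      simp only [hS, dif_pos] at hT ⊢
      simp only [show T.Nonempty from ⟨_, hT⟩, dif_pos]
      exact le_antisymm (wellFounded_lt.min_le hT)
        (wellFounded_lt.min_le (hTS (wellFounded_lt.min_mem T ⟨_, hT⟩))) }

noncomputable def prefer (a : α) (s : CoherentChoice α) : CoherentChoice α where
  pick S := if a ∈ S then a else s.pick S
  pick_mem hS := by
    split_ifs with ha
    exacts [ha, s.pick_mem hS]
  pick_eq {S T} hTS hT := by
    by_cases ha : a ∈ S
    · simp only [ha, if_true] at hT ⊢
      simp [hT]
    · simp only [ha, if_false] at hT ⊢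
      rw [if_neg fun h => ha (hTS h), s.pick_eq hTS hT]

lemma prefer_pick_of_mem (a : α) (s : CoherentChoice α) {S : Set α} (ha : a ∈ S) :
    (s.prefer a).pick S = a :=
  if_pos ha

lemma pick_singleton (s : CoherentChoice α) (a : α) : s.pick {a} = a :=
  s.pick_mem (singleton_nonempty a)

end CoherentChoice

namespace IsFCP

variable {𝒜 : Set (Set Ω)} {P : Set Ω → Set Ω → ℝ}

lemma apply_eq_one_of_subset (hP : IsFCP 𝒜 P) (h𝒜 : IsSetField 𝒜) {F K : Set Ω}
    (hF : F ∈ 𝒜) (hK : K ∈ 𝒜) (hKne : K.Nonempty) (hKF : K ⊆ F) : P F K = 1 := by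
  rw [hP.1 F hF K hK hKne, inter_eq_right.2 hKF, ← (hP.2.1 K hK hKne).apply_univ,
    hP.1 univ h𝒜.1 K hK hKne, univ_inter]

lemma apply_eq_div (hP : IsFCP 𝒜 P) (h𝒜 : IsSetField 𝒜) {F K : Set Ω} (hF : F ∈ 𝒜)
    (hK : K ∈ 𝒜) (hKne : K.Nonempty) (hpos : 0 < P K univ) :
    P F K = P (F ∩ K) univ / P K univ := by
  have h := hP.2.2 K hK F hF univ h𝒜.1 (hKne.mono (subset_univ K)) (by rwa [inter_univ])
  rw [inter_univ] at h
  rw [inter_comm, h, mul_div_cancel_left₀ _ hpos.ne']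

end IsFCP

noncomputable def lexCond (μ : Set Ω → ℝ) (Q : Set Ω → Set Ω → ℝ) (E K : Set Ω) : ℝ :=
  if 0 < μ K then μ (E ∩ K) / μ K else Q E K

lemma isFCP_lexCond {𝒜 : Set (Set Ω)} (h𝒜 : IsSetField 𝒜) {μ : Set Ω → ℝ}
    {Q : Set Ω → Set Ω → ℝ} (hμ : IsFAP 𝒜 μ) (hQ : IsFCP 𝒜 Q) : IsFCP 𝒜 (lexCond μ Q) := by
  refine ⟨fun E hE K hK hKne => ?_, fun K hK hKne => ?_, fun E hE F hF K hK hKne hEKne => ?_⟩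
  · unfold lexCond
    split_ifs
    exacts [by rw [inter_assoc, inter_self], hQ.1 E hE K hK hKne]
  · by_cases hμK : 0 < μ K
    · simpa only [lexCond, hμK, if_true] using hμ.cond h𝒜 hK hμK
    · simpa only [lexCond, hμK, if_false] using hQ.2.1 K hK hKne
  have hEK := h𝒜.inter_mem hE hK
  have hFEK := h𝒜.inter_mem hF hEK
  have hEFK : E ∩ F ∩ K = F ∩ (E ∩ K) := by
    rw [inter_comm E F, inter_assoc]
  by_cases hμK : 0 < μ K
  · by_cases hμEK : 0 < μ (E ∩ K)
    · simp only [lexCond, hμK, hμEK, if_true, hEFK]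
      field_simp
    · have h0 : μ (E ∩ K) = 0 := le_antisymm (not_lt.1 hμEK) (hμ.nonneg hEK)
      have h1 : μ (F ∩ (E ∩ K)) = 0 :=
        le_antisymm (h0 ▸ hμ.mono h𝒜 hFEK hEK inter_subset_right) (hμ.nonneg hFEK)
      simp only [lexCond, hμK, if_true, hEFK, h0, h1, zero_div, zero_mul]
  · have hμEK : ¬ 0 < μ (E ∩ K) :=
      fun h => hμK (h.trans_le (hμ.mono h𝒜 hEK hK inter_subset_right))
    simp only [lexCond, hμK, hμEK, if_false]
    exact hQ.2.2 E hE F hF K hK hKne hEKne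

noncomputable def diracCond (s : CoherentChoice Ω) (E K : Set Ω) : ℝ :=
  if s.pick K ∈ E then 1 else 0

lemma isFCP_diracCond (𝒜 : Set (Set Ω)) (s : CoherentChoice Ω) : IsFCP 𝒜 (diracCond s) := by
  refine ⟨fun E _ K _ hKne => ?_, fun K _ hKne => ⟨fun A _ => ?_, ?_, fun A _ B _ hAB => ?_⟩,
    fun E _ F _ K _ hKne hEKne => ?_⟩
  · simp [diracCond, s.pick_mem hKne]
  · dsimp only [diracCond]
    split_ifs <;> norm_num
  · simp [diracCond]
  · by_cases hA : s.pick K ∈ A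
    · simp [diracCond, hA, disjoint_left.1 hAB hA]
    · simp [diracCond, hA]
  · by_cases hE : s.pick K ∈ E
    · simp only [diracCond, s.pick_eq inter_subset_right ⟨hE, s.pick_mem hKne⟩]
      simp [hE]
    · simp [diracCond, hE]

section BlockCond

variable {H : ι → Set Ω} (s : CoherentChoice ι)

noncomputable def blockOf (H : ι → Set Ω) (K : Set Ω) : ι := s.pick {i | (H i ∩ K).Nonempty}

lemma inter_blockOf_nonempty (hH : IsPartition H) {K : Set Ω} (hK : K.Nonempty) :
    (K ∩ H (blockOf s H K)).Nonempty := by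
  obtain ⟨x, hx⟩ := hK
  obtain ⟨i, hi⟩ := hH.exists_mem x
  rw [inter_comm]
  exact s.pick_mem (S := {i | (H i ∩ K).Nonempty}) ⟨i, x, hi, hx⟩

lemma blockOf_eq_of_subset {K T : Set Ω} (hTK : T ⊆ K) (hT : (H (blockOf s H K) ∩ T).Nonempty) :
    blockOf s H T = blockOf s H K :=
  s.pick_eq (fun _ hj => hj.mono (inter_subset_inter_right _ hTK)) hT

lemma blockOf_block (hH : IsPartition H) (i : ι) : blockOf s H (H i) = i := by
  have : {j | (H j ∩ H i).Nonempty} = {i} := by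
    ext j
    refine ⟨fun hj => ?_, fun hj => ?_⟩
    · by_contra hji
      exact not_disjoint_iff_nonempty_inter.2 hj (hH.2.1 hji)
    · rw [mem_singleton_iff.1 hj]
      show (H i ∩ H i).Nonempty
      rw [inter_self]
      exact hH.1 i
  rw [blockOf, this, s.pick_singleton]

noncomputable def blockCond (H : ι → Set Ω) (Q : ι → Set Ω → Set Ω → ℝ) (E K : Set Ω) : ℝ :=
  Q (blockOf s H K) E (K ∩ H (blockOf s H K))

lemma blockCond_of_blockOf {Q : ι → Set Ω → Set Ω → ℝ} {K : Set Ω} {i : ι}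
    (hi : blockOf s H K = i) (hiK : H i ⊆ K) (E : Set Ω) : blockCond s H Q E K = Q i E (H i) := by
  rw [blockCond, hi, inter_eq_right.2 hiK]

lemma isFCP_blockCond {𝒜 : Set (Set Ω)} (h𝒜 : IsSetField 𝒜) (hH : IsPartition H)
    (hH𝒜 : ∀ i, H i ∈ 𝒜) {Q : ι → Set Ω → Set Ω → ℝ} (hQ : ∀ i, IsFCP 𝒜 (Q i)) :
    IsFCP 𝒜 (blockCond s H Q) := by
  refine ⟨fun E hE K hK hKne => ?_, fun K hK hKne => ?_, fun E hE F hF K hK hKne hEKne => ?_⟩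
  · set i := blockOf s H K
    have hK' := inter_blockOf_nonempty s hH hKne
    rw [blockCond, blockCond, (hQ i).1 E hE _ (h𝒜.inter_mem hK (hH𝒜 i)) hK',
      (hQ i).1 (E ∩ K) (h𝒜.inter_mem hE hK) _ (h𝒜.inter_mem hK (hH𝒜 i)) hK']
    congr 1
    rw [inter_assoc, ← inter_assoc K, inter_self]
  · exact (hQ _).2.1 _ (h𝒜.inter_mem hK (hH𝒜 _)) (inter_blockOf_nonempty s hH hKne)
  -- If the block chosen for `K` meets `E ∩ K`, it is also the one chosen for `E ∩ K`;
  -- otherwise both sides vanish.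
  set i := blockOf s H K
  have hK'𝒜 : K ∩ H i ∈ 𝒜 := h𝒜.inter_mem hK (hH𝒜 i)
  by_cases hi : (H i ∩ (E ∩ K)).Nonempty
  · have hEK' : (E ∩ (K ∩ H i)).Nonempty := by
      rwa [← inter_assoc, inter_comm]
    simp only [blockCond, blockOf_eq_of_subset s inter_subset_right hi]
    rw [(hQ i).2.2 E hE F hF _ hK'𝒜 (inter_blockOf_nonempty s hH hKne) hEK', inter_assoc]
  · have hempty : E ∩ (K ∩ H i) = ∅ := by
      rw [← not_nonempty_iff_eq_empty]
      rwa [← inter_assoc, inter_comm]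
    have hzero : ∀ G ∈ 𝒜, G ⊆ E → Q i G (K ∩ H i) = 0 := by
      intro G hG hGE
      have hG0 : G ∩ (K ∩ H i) = ∅ :=
        subset_empty_iff.1 (hempty ▸ inter_subset_inter_left (K ∩ H i) hGE)
      rw [(hQ i).1 G hG _ hK'𝒜 (inter_blockOf_nonempty s hH hKne), hG0,
        ((hQ i).2.1 _ hK'𝒜 (inter_blockOf_nonempty s hH hKne)).apply_empty h𝒜]
    simp only [blockCond]
    rw [hzero _ (h𝒜.inter_mem hE hF) inter_subset_left, hzero E hE subset_rfl, zero_mul]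

end BlockCond

section UpperIntegral

variable (H : ι → Set Ω) (𝒜L : Set (Set Ω))

/-- The pieces are indexed by a finite type rather than forming a `Finset`, so that common
refinements are indexed by products and empty pieces do no harm. -/
structure StepMajorant (f : ι → ℝ) where
  Idx : Type
  [fintype : Fintype Idx]
  piece : Idx → Set Ω
  value : Idx → ℝ
  piece_mem : ∀ a, piece a ∈ 𝒜L
  pairwise_disjoint : Pairwise (Disjoint on piece)
  iUnion_piece : ⋃ a, piece a = univ
  le_value : ∀ a i, H i ⊆ piece a → f i ≤ value a

attribute [instance] StepMajorant.fintype

variable {H 𝒜L} {π : Set Ω → ℝ} {f g : ι → ℝ}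

namespace StepMajorant

def integral (m : StepMajorant H 𝒜L f) (π : Set Ω → ℝ) : ℝ :=
  ∑ a, m.value a * π (m.piece a)

def const (h𝒜L : IsSetField 𝒜L) {c : ℝ} (hf : ∀ i, f i ≤ c) : StepMajorant H 𝒜L f where
  Idx := Unit
  piece _ := univ
  value _ := c
  piece_mem _ := h𝒜L.1
  pairwise_disjoint a b hab := absurd (Subsingleton.elim a b) hab
  iUnion_piece := iUnion_const univ
  le_value _ i _ := hf i

lemma integral_const (h𝒜L : IsSetField 𝒜L) {c : ℝ} (hf : ∀ i, f i ≤ c) (hπ : IsFAP 𝒜L π) :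
    (const (H := H) h𝒜L hf).integral π = c := by
  show ∑ _ : Unit, c * π univ = c
  simp [hπ.apply_univ]

def two (h𝒜L : IsSetField 𝒜L) {B : Set Ω} (hB : B ∈ 𝒜L) {c₁ c₂ : ℝ}
    (h₁ : ∀ i, H i ⊆ B → f i ≤ c₁) (h₂ : ∀ i, H i ⊆ Bᶜ → f i ≤ c₂) : StepMajorant H 𝒜L f where
  Idx := Bool
  piece b := cond b B Bᶜ
  value b := cond b c₁ c₂
  piece_mem b := by cases b; exacts [h𝒜L.compl_mem hB, hB]
  pairwise_disjoint := by
    rintro (_ | _) (_ | _) h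
    exacts [absurd rfl h, disjoint_compl_left, disjoint_compl_right, absurd rfl h]
  iUnion_piece := by rw [← union_eq_iUnion, union_compl_self]
  le_value b i hi := by cases b; exacts [h₂ i hi, h₁ i hi]

lemma integral_two (h𝒜L : IsSetField 𝒜L) {B : Set Ω} (hB : B ∈ 𝒜L) {c₁ c₂ : ℝ}
    (h₁ : ∀ i, H i ⊆ B → f i ≤ c₁) (h₂ : ∀ i, H i ⊆ Bᶜ → f i ≤ c₂) :
    (two h𝒜L hB h₁ h₂).integral π = c₁ * π B + c₂ * π Bᶜ := by
  show ∑ b : Bool, cond b c₁ c₂ * π (cond b B Bᶜ) = _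
  simp

def add (h𝒜L : IsSetField 𝒜L) (m₁ : StepMajorant H 𝒜L f) (m₂ : StepMajorant H 𝒜L g) :
    StepMajorant H 𝒜L (f + g) where
  Idx := m₁.Idx × m₂.Idx
  piece p := m₁.piece p.1 ∩ m₂.piece p.2
  value p := m₁.value p.1 + m₂.value p.2
  piece_mem p := h𝒜L.inter_mem (m₁.piece_mem p.1) (m₂.piece_mem p.2)
  pairwise_disjoint := by
    rintro ⟨a, b⟩ ⟨a', b'⟩ hne
    by_cases ha : a = a'
    · have hb : b ≠ b' := fun hb => hne (by rw [ha, hb])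
      exact (m₂.pairwise_disjoint hb).mono inter_subset_right inter_subset_right
    · exact (m₁.pairwise_disjoint ha).mono inter_subset_left inter_subset_left
  iUnion_piece := by
    refine eq_univ_of_forall fun x => ?_
    obtain ⟨a, ha⟩ := mem_iUnion.1 (m₁.iUnion_piece.symm ▸ mem_univ x : x ∈ ⋃ a, m₁.piece a)
    obtain ⟨b, hb⟩ := mem_iUnion.1 (m₂.iUnion_piece.symm ▸ mem_univ x : x ∈ ⋃ b, m₂.piece b)
    exact mem_iUnion.2 ⟨(a, b), ha, hb⟩
  le_value p i hi := add_le_add (m₁.le_value p.1 i (hi.trans inter_subset_left))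
    (m₂.le_value p.2 i (hi.trans inter_subset_right))

lemma sum_apply_inter_piece (h𝒜L : IsSetField 𝒜L) (hπ : IsFAP 𝒜L π) (m : StepMajorant H 𝒜L f)
    {X : Set Ω} (hX : X ∈ 𝒜L) : ∑ a, π (X ∩ m.piece a) = π X := by
  rw [← hπ.apply_biUnion h𝒜L Finset.univ (fun a _ => h𝒜L.inter_mem hX (m.piece_mem a))
    fun a _ b _ hab => (m.pairwise_disjoint hab).mono inter_subset_right inter_subset_right]
  simp [← inter_iUnion, m.iUnion_piece]

lemma integral_add (h𝒜L : IsSetField 𝒜L) (hπ : IsFAP 𝒜L π) (m₁ : StepMajorant H 𝒜L f)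
    (m₂ : StepMajorant H 𝒜L g) : (add h𝒜L m₁ m₂).integral π = m₁.integral π + m₂.integral π := by
  show ∑ p : m₁.Idx × m₂.Idx, (m₁.value p.1 + m₂.value p.2) * π (m₁.piece p.1 ∩ m₂.piece p.2) = _
  simp only [add_mul, Finset.sum_add_distrib, Fintype.sum_prod_type, integral]
  congr 1
  · simp_rw [← Finset.mul_sum, m₂.sum_apply_inter_piece h𝒜L hπ (m₁.piece_mem _)]
  · rw [Finset.sum_comm]
    simp_rw [← Finset.mul_sum, inter_comm (m₁.piece _),
      m₁.sum_apply_inter_piece h𝒜L hπ (m₂.piece_mem _)]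

def smul (m : StepMajorant H 𝒜L f) {c : ℝ} (hc : 0 ≤ c) : StepMajorant H 𝒜L (c • f) where
  Idx := m.Idx
  piece := m.piece
  value a := c * m.value a
  piece_mem := m.piece_mem
  pairwise_disjoint := m.pairwise_disjoint
  iUnion_piece := m.iUnion_piece
  le_value a i hi := mul_le_mul_of_nonneg_left (m.le_value a i hi) hc

lemma integral_smul (m : StepMajorant H 𝒜L f) {c : ℝ} (hc : 0 ≤ c) :
    (m.smul hc).integral π = c * m.integral π := by
  show ∑ a, c * m.value a * π (m.piece a) = _
  simp [integral, Finset.mul_sum, mul_assoc]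

lemma le_integral (h𝒜L : IsFieldOver H 𝒜L) (hπ : IsFAP 𝒜L π) (m : StepMajorant H 𝒜L f) {c : ℝ}
    (hc : ∀ i, c ≤ f i) : c ≤ m.integral π := by
  rw [← mul_one c, ← hπ.sum_apply_eq_one h𝒜L.1 m.piece_mem m.pairwise_disjoint m.iUnion_piece,
    Finset.mul_sum]
  refine Finset.sum_le_sum fun a _ => ?_
  rcases (m.piece a).eq_empty_or_nonempty with hempty | hne
  · simp [hempty, hπ.apply_empty h𝒜L.1]
  · obtain ⟨i, hi⟩ := h𝒜L.exists_subset (m.piece_mem a) hne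
    exact mul_le_mul_of_nonneg_right ((hc i).trans (m.le_value a i hi))
      (hπ.nonneg (m.piece_mem a))

end StepMajorant

noncomputable def upperIntegral (H : ι → Set Ω) (𝒜L : Set (Set Ω)) (π : Set Ω → ℝ)
    (f : ι → ℝ) : ℝ :=
  ⨅ m : StepMajorant H 𝒜L f, m.integral π

lemma upperIntegral_le (h𝒜L : IsFieldOver H 𝒜L) (hπ : IsFAP 𝒜L π) {c : ℝ} (hc : ∀ i, c ≤ f i)
    (m : StepMajorant H 𝒜L f) : upperIntegral H 𝒜L π f ≤ m.integral π :=
  ciInf_le ⟨c, forall_mem_range.2 fun m => m.le_integral h𝒜L hπ hc⟩ m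

lemma le_upperIntegral (h𝒜L : IsFieldOver H 𝒜L) (hπ : IsFAP 𝒜L π) {c M : ℝ}
    (hc : ∀ i, c ≤ f i) (hM : ∀ i, f i ≤ M) : c ≤ upperIntegral H 𝒜L π f :=
  have : Nonempty (StepMajorant H 𝒜L f) := ⟨.const h𝒜L.1 hM⟩
  le_ciInf fun m => m.le_integral h𝒜L hπ hc

def boundedFunctions (ι : Type*) : Submodule ℝ (ι → ℝ) where
  carrier := {f | ∃ M, ∀ i, |f i| ≤ M}
  add_mem' := by
    rintro f g ⟨Mf, hf⟩ ⟨Mg, hg⟩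
    exact ⟨Mf + Mg, fun i => (abs_add_le _ _).trans (add_le_add (hf i) (hg i))⟩
  zero_mem' := ⟨0, fun i => by simp⟩
  smul_mem' := by
    rintro c f ⟨M, hf⟩
    exact ⟨|c| * M, fun i => by
      simpa only [Pi.smul_apply, smul_eq_mul, abs_mul] using
        mul_le_mul_of_nonneg_left (hf i) (abs_nonneg c)⟩

lemma upperIntegral_add (h𝒜L : IsFieldOver H 𝒜L) (hπ : IsFAP 𝒜L π)
    (hf : f ∈ boundedFunctions ι) (hg : g ∈ boundedFunctions ι) :
    upperIntegral H 𝒜L π (f + g) ≤ upperIntegral H 𝒜L π f + upperIntegral H 𝒜L π g := by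
  obtain ⟨Mf, hMf⟩ := hf
  obtain ⟨Mg, hMg⟩ := hg
  have : Nonempty (StepMajorant H 𝒜L f) := ⟨.const h𝒜L.1 fun i => (abs_le.1 (hMf i)).2⟩
  have : Nonempty (StepMajorant H 𝒜L g) := ⟨.const h𝒜L.1 fun i => (abs_le.1 (hMg i)).2⟩
  refine le_ciInf_add_ciInf fun m₁ m₂ => ?_
  rw [← m₁.integral_add h𝒜L.1 hπ m₂]
  exact upperIntegral_le h𝒜L hπ (c := -Mf + -Mg)
    (fun i => add_le_add (abs_le.1 (hMf i)).1 (abs_le.1 (hMg i)).1) _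

lemma upperIntegral_smul_le (h𝒜L : IsFieldOver H 𝒜L) (hπ : IsFAP 𝒜L π)
    (hf : f ∈ boundedFunctions ι) {c : ℝ} (hc : 0 ≤ c) :
    upperIntegral H 𝒜L π (c • f) ≤ c * upperIntegral H 𝒜L π f := by
  obtain ⟨M, hM⟩ := hf
  have : Nonempty (StepMajorant H 𝒜L f) := ⟨.const h𝒜L.1 fun i => (abs_le.1 (hM i)).2⟩
  rw [show c * upperIntegral H 𝒜L π f = ⨅ m : StepMajorant H 𝒜L f, c * m.integral π from
    Real.mul_iInf_of_nonneg hc _]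
  refine le_ciInf fun m => ?_
  rw [← m.integral_smul hc]
  exact upperIntegral_le h𝒜L hπ (c := c * -M)
    (fun i => mul_le_mul_of_nonneg_left (abs_le.1 (hM i)).1 hc) _

lemma upperIntegral_smul (h𝒜L : IsFieldOver H 𝒜L) (hπ : IsFAP 𝒜L π)
    (hf : f ∈ boundedFunctions ι) {c : ℝ} (hc : 0 < c) :
    upperIntegral H 𝒜L π (c • f) = c * upperIntegral H 𝒜L π f := by
  refine le_antisymm (upperIntegral_smul_le h𝒜L hπ hf hc.le) ?_
  have h := upperIntegral_smul_le h𝒜L hπ ((boundedFunctions ι).smul_mem c hf) (inv_nonneg.2 hc.le)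
  rw [inv_smul_smul₀ hc.ne'] at h
  rwa [← le_div_iff₀' hc, div_eq_inv_mul]

lemma exists_linearMap_le_upperIntegral (h𝒜L : IsFieldOver H 𝒜L) (hπ : IsFAP 𝒜L π) :
    ∃ Λ : boundedFunctions ι →ₗ[ℝ] ℝ, ∀ x, Λ x ≤ upperIntegral H 𝒜L π x := by
  obtain ⟨Λ, -, hΛ⟩ := exists_extension_of_le_sublinear ⊥
    (fun x : boundedFunctions ι => upperIntegral H 𝒜L π x)
    (fun c hc x => upperIntegral_smul h𝒜L hπ x.2 hc)
    (fun x y => upperIntegral_add h𝒜L hπ x.2 y.2)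
    (fun x => by
      have hx : (x : boundedFunctions ι) = 0 := (Submodule.mem_bot ℝ).1 x.2
      show (0 : ℝ) ≤ upperIntegral H 𝒜L π (x : boundedFunctions ι)
      rw [hx]
      exact le_upperIntegral h𝒜L hπ (c := 0) (M := 0) (fun _ => le_rfl) fun _ => le_rfl)
  exact ⟨Λ, hΛ⟩

end UpperIntegral

namespace IsStrategy

variable {𝒜 : Set (Set Ω)} {H : ι → Set Ω} {σ : Set Ω → ι → ℝ}

lemma isFAP (hσ : IsStrategy 𝒜 H σ) (i : ι) : IsFAP 𝒜 fun F => σ F i := (hσ i).1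

lemma apply_eq_one (hσ : IsStrategy 𝒜 H σ) {F : Set Ω} (hF : F ∈ 𝒜) {i : ι} (hi : H i ⊆ F) :
    σ F i = 1 :=
  (hσ i).2 F hF hi

lemma apply_eq_zero (hσ : IsStrategy 𝒜 H σ) (h𝒜 : IsSetField 𝒜) {i : ι} (hHi : H i ∈ 𝒜)
    {F : Set Ω} (hF : F ∈ 𝒜) (hFi : F ⊆ (H i)ᶜ) : σ F i = 0 :=
  (hσ.isFAP i).apply_eq_zero_of_subset_compl h𝒜 hHi hF (hσ.apply_eq_one hHi subset_rfl) hFi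

lemma apply_inter_block (hσ : IsStrategy 𝒜 H σ) (h𝒜 : IsSetField 𝒜) {i : ι} (hHi : H i ∈ 𝒜)
    {F : Set Ω} (hF : F ∈ 𝒜) : σ (F ∩ H i) i = σ F i :=
  (hσ.isFAP i).apply_inter_of_apply_eq_one h𝒜 hHi hF (hσ.apply_eq_one hHi subset_rfl)

end IsStrategy

section Compound

variable {H : ι → Set Ω} {𝒜L : Set (Set Ω)} {π : Set Ω → ℝ}
  {Λ : boundedFunctions ι →ₗ[ℝ] ℝ}

lemma linearMap_nonneg (hΛ : ∀ x, Λ x ≤ upperIntegral H 𝒜L π x) (h𝒜L : IsFieldOver H 𝒜L)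
    (hπ : IsFAP 𝒜L π) {x : boundedFunctions ι} (hx : ∀ i, 0 ≤ (x : ι → ℝ) i) : 0 ≤ Λ x := by
  obtain ⟨M, hM⟩ := (-x).2
  have hle : ∀ i, ((-x : boundedFunctions ι) : ι → ℝ) i ≤ 0 := fun i => by simpa using hx i
  have h := (hΛ (-x)).trans (upperIntegral_le h𝒜L hπ (fun i => (abs_le.1 (hM i)).1)
    (.const h𝒜L.1 hle))
  rw [StepMajorant.integral_const h𝒜L.1 hle hπ, map_neg] at h
  linarith

lemma linearMap_apply_eq_of_blocks (hΛ : ∀ x, Λ x ≤ upperIntegral H 𝒜L π x)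
    (h𝒜L : IsFieldOver H 𝒜L) (hπ : IsFAP 𝒜L π) {x : boundedFunctions ι} {B : Set Ω}
    (hB : B ∈ 𝒜L) (h₁ : ∀ i, H i ⊆ B → (x : ι → ℝ) i = 1)
    (h₀ : ∀ i, H i ⊆ Bᶜ → (x : ι → ℝ) i = 0) : Λ x = π B := by
  obtain ⟨M, hM⟩ := x.2
  have hupper := (hΛ x).trans (upperIntegral_le h𝒜L hπ (fun i => (abs_le.1 (hM i)).1)
    (.two h𝒜L.1 hB (fun i hi => (h₁ i hi).le) fun i hi => (h₀ i hi).le))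
  have hlower := (hΛ (-x)).trans (upperIntegral_le h𝒜L hπ
    (fun i => neg_le_neg (abs_le.1 (hM i)).2)
    (.two h𝒜L.1 hB (c₁ := -1) (c₂ := 0) (fun i hi => by simp [h₁ i hi])
      fun i hi => by simp [h₀ i hi]))
  rw [StepMajorant.integral_two] at hupper hlower
  rw [map_neg] at hlower
  linarith

theorem exists_compound {𝒜 : Set (Set Ω)} {σ : Set Ω → ι → ℝ} (hH : IsPartition H)
    (h𝒜L : IsFieldOver H 𝒜L) (h𝒜 : IsSetField 𝒜) (h𝒜L𝒜 : 𝒜L ⊆ 𝒜) (hπ : IsFAP 𝒜L π)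
    (hσ : IsStrategy 𝒜 H σ) :
    ∃ μ : Set Ω → ℝ, IsFAP 𝒜 μ ∧ (∀ B ∈ 𝒜L, μ B = π B) ∧
      ∀ F ∈ 𝒜, ∀ i, μ (F ∩ H i) = σ F i * π (H i) := by
  obtain ⟨Λ, hΛ⟩ := exists_linearMap_le_upperIntegral h𝒜L hπ
  have hH𝒜 : ∀ i, H i ∈ 𝒜 := fun i => h𝒜L𝒜 (h𝒜L.2.1 i)
  have hbdd : ∀ F ∈ 𝒜, (fun i => σ F i) ∈ boundedFunctions ι := fun F hF =>
    ⟨1, fun i => abs_le.2 ⟨by linarith [(hσ.isFAP i).nonneg hF], (hσ.isFAP i).le_one hF⟩⟩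
  let v : Set Ω → boundedFunctions ι := fun F => if hF : F ∈ 𝒜 then ⟨_, hbdd F hF⟩ else 0
  have hv : ∀ F ∈ 𝒜, ∀ i, (v F : ι → ℝ) i = σ F i := fun F hF i => by simp [v, hF]
  have hadd : ∀ A ∈ 𝒜, ∀ B ∈ 𝒜, Disjoint A B → Λ (v (A ∪ B)) = Λ (v A) + Λ (v B) := by
    intro A hA B hB hAB
    rw [← map_add]
    congr 1
    ext i
    simp only [Submodule.coe_add, Pi.add_apply, hv _ (h𝒜.union_mem hA hB), hv A hA, hv B hB]
    exact (hσ.isFAP i).apply_union hA hB hAB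
  have hext : ∀ B ∈ 𝒜L, Λ (v B) = π B := fun B hB =>
    linearMap_apply_eq_of_blocks hΛ h𝒜L hπ hB
      (fun i hi => by rw [hv B (h𝒜L𝒜 hB)]; exact hσ.apply_eq_one (h𝒜L𝒜 hB) hi)
      fun i hi => by
        rw [hv B (h𝒜L𝒜 hB)]
        exact hσ.apply_eq_zero h𝒜 (hH𝒜 i) (h𝒜L𝒜 hB) (subset_compl_comm.1 hi)
  have hnonneg : ∀ F ∈ 𝒜, 0 ≤ Λ (v F) := fun F hF =>
    linearMap_nonneg hΛ h𝒜L hπ fun i => by rw [hv F hF]; exact (hσ.isFAP i).nonneg hF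
  have huniv : Λ (v univ) = 1 := by rw [hext univ h𝒜L.1.1, hπ.apply_univ]
  refine ⟨fun F => Λ (v F), ⟨fun A hA => ⟨hnonneg A hA, ?_⟩, huniv, hadd⟩, hext,
    fun F hF i => ?_⟩
  · have h := hadd A hA Aᶜ (h𝒜.compl_mem hA) disjoint_compl_right
    rw [union_compl_self, huniv] at h
    linarith [hnonneg Aᶜ (h𝒜.compl_mem hA)]
  · have hsmul : v (F ∩ H i) = σ F i • v (H i) := by
      ext j
      simp only [Submodule.coe_smul, Pi.smul_apply, smul_eq_mul,
        hv _ (h𝒜.inter_mem hF (hH𝒜 i)), hv _ (hH𝒜 i)]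
      rcases eq_or_ne j i with rfl | hji
      · rw [hσ.apply_inter_block h𝒜 (hH𝒜 j) hF, hσ.apply_eq_one (hH𝒜 j) subset_rfl, mul_one]
      · have hdisj : ∀ G ⊆ H i, G ⊆ (H j)ᶜ := fun G hG =>
          hG.trans (subset_compl_iff_disjoint_left.2 (hH.2.1 hji))
        rw [hσ.apply_eq_zero h𝒜 (hH𝒜 j) (h𝒜.inter_mem hF (hH𝒜 i)) (hdisj _ inter_subset_right),
          hσ.apply_eq_zero h𝒜 (hH𝒜 j) (hH𝒜 i) (hdisj _ subset_rfl), mul_zero]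
    simp only [hsmul, map_smul, smul_eq_mul, hext _ (h𝒜L.2.1 i)]

end Compound

section LowerEnvelope

variable {H : ι → Set Ω} {𝒜L 𝒜 : Set (Set Ω)} {π μ : Set Ω → ℝ} {σ : Set Ω → ι → ℝ}

noncomputable def lexExtension (H : ι → Set Ω) (σ : Set Ω → ι → ℝ) (μ : Set Ω → ℝ)
    (sι : CoherentChoice ι) (sΩ : CoherentChoice Ω) : Set Ω → Set Ω → ℝ :=
  lexCond μ (blockCond sι H fun i => lexCond (fun F => σ F i) (diracCond sΩ))

lemma lexExtension_of_blockOf (h𝒜 : IsSetField 𝒜) (hσ : IsStrategy 𝒜 H σ)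
    (hH𝒜 : ∀ i, H i ∈ 𝒜) (sι : CoherentChoice ι) (sΩ : CoherentChoice Ω) {F K : Set Ω}
    (hF : F ∈ 𝒜) (hμK : ¬ 0 < μ K) {i : ι} (hi : blockOf sι H K = i) (hiK : H i ⊆ K) :
    lexExtension H σ μ sι sΩ F K = σ F i := by
  rw [lexExtension, lexCond, if_neg hμK, blockCond_of_blockOf sι hi hiK, lexCond,
    hσ.apply_eq_one (hH𝒜 i) subset_rfl, if_pos one_pos, div_one,
    hσ.apply_inter_block h𝒜 (hH𝒜 i) hF]

lemma lexExtension_mem_FCPSet (hH : IsPartition H) (h𝒜L : IsFieldOver H 𝒜L)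
    (h𝒜 : IsSetField 𝒜) (h𝒜L𝒜 : 𝒜L ⊆ 𝒜) (hσ : IsStrategy 𝒜 H σ) (hμ : IsFAP 𝒜 μ)
    (hμπ : ∀ B ∈ 𝒜L, μ B = π B) (hμσ : ∀ F ∈ 𝒜, ∀ i, μ (F ∩ H i) = σ F i * π (H i))
    (sι : CoherentChoice ι) (sΩ : CoherentChoice Ω) :
    lexExtension H σ μ sι sΩ ∈ FCPSet 𝒜 𝒜L H π σ := by
  have hH𝒜 : ∀ i, H i ∈ 𝒜 := fun i => h𝒜L𝒜 (h𝒜L.2.1 i)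
  refine ⟨isFCP_lexCond h𝒜 hμ (isFCP_blockCond sι h𝒜 hH hH𝒜 fun i =>
      isFCP_lexCond h𝒜 (hσ.isFAP i) (isFCP_diracCond 𝒜 sΩ)), fun B hB => ?_, fun F hF i => ?_⟩
  · rw [lexExtension, lexCond, if_pos (hμ.apply_univ ▸ one_pos), inter_univ, hμ.apply_univ,
      div_one, hμπ B hB]
  · by_cases hμi : 0 < μ (H i)
    · rw [lexExtension, lexCond, if_pos hμi, hμσ F hF i, hμπ _ (h𝒜L.2.1 i)]
      rw [hμπ _ (h𝒜L.2.1 i)] at hμi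
      field_simp
    · exact lexExtension_of_blockOf h𝒜 hσ hH𝒜 sι sΩ hF hμi (blockOf_block sι hH i) subset_rfl

lemma FCPSet_nonempty [Nonempty Ω] (hH : IsPartition H) (h𝒜L : IsFieldOver H 𝒜L)
    (h𝒜 : IsSetField 𝒜) (h𝒜L𝒜 : 𝒜L ⊆ 𝒜) (hπ : IsFAP 𝒜L π) (hσ : IsStrategy 𝒜 H σ) :
    (FCPSet 𝒜 𝒜L H π σ).Nonempty := by
  obtain ⟨μ, hμ, hμπ, hμσ⟩ := exists_compound hH h𝒜L h𝒜 h𝒜L𝒜 hπ hσ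
  have : Nonempty ι := ⟨(hH.exists_mem (Classical.arbitrary Ω)).choose⟩
  exact ⟨_, lexExtension_mem_FCPSet hH h𝒜L h𝒜 h𝒜L𝒜 hσ hμ hμπ hμσ
    (.ofWellOrder ι) (.ofWellOrder Ω)⟩

lemma exists_mem_FCPSet_apply_eq_zero [Nonempty Ω] (hH : IsPartition H)
    (h𝒜L : IsFieldOver H 𝒜L) (h𝒜 : IsSetField 𝒜) (h𝒜L𝒜 : 𝒜L ⊆ 𝒜) (hπ : IsFAP 𝒜L π)
    (hσ : IsStrategy 𝒜 H σ) {F K : Set Ω} (hF : F ∈ 𝒜L) (hK : K ∈ 𝒜L) (hπK : π K = 0)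
    (hKF : ¬ K ⊆ F) : ∃ P ∈ FCPSet 𝒜 𝒜L H π σ, P F K = 0 := by
  have hH𝒜 : ∀ i, H i ∈ 𝒜 := fun i => h𝒜L𝒜 (h𝒜L.2.1 i)
  obtain ⟨μ, hμ, hμπ, hμσ⟩ := exists_compound hH h𝒜L h𝒜 h𝒜L𝒜 hπ hσ
  obtain ⟨j, hj⟩ := h𝒜L.exists_subset (h𝒜L.1.inter_mem hK (h𝒜L.1.compl_mem hF))
    (sdiff_nonempty.2 hKF)
  have : Nonempty ι := ⟨j⟩
  let sι := (CoherentChoice.ofWellOrder ι).prefer j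
  have hjK : H j ⊆ K := hj.trans inter_subset_left
  have hpick : blockOf sι H K = j := by
    obtain ⟨x, hx⟩ := hH.1 j
    exact CoherentChoice.prefer_pick_of_mem j _ ⟨x, hx, hjK hx⟩
  refine ⟨_, lexExtension_mem_FCPSet hH h𝒜L h𝒜 h𝒜L𝒜 hσ hμ hμπ hμσ sι (.ofWellOrder Ω), ?_⟩
  rw [lexExtension_of_blockOf h𝒜 hσ hH𝒜 sι _ (h𝒜L𝒜 hF) (by simp [hμπ K hK, hπK]) hpick hjK]
  exact hσ.apply_eq_zero h𝒜 (hH𝒜 j) (h𝒜L𝒜 hF) (subset_compl_comm.1 (hj.trans inter_subset_right))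

lemma lowEnv_eq_of_mem_of_le {Ps : Set (Set Ω → Set Ω → ℝ)} {F K : Set Ω} {c : ℝ}
    (hmem : ∃ P ∈ Ps, P F K = c) (hle : ∀ P ∈ Ps, c ≤ P F K) : lowEnv Ps F K = c :=
  IsLeast.csInf_eq ⟨hmem, forall_mem_image.2 hle⟩

noncomputable def lowerCondPrior (π : Set Ω → ℝ) (K : Set Ω) : Set Ω → ℝ :=
  if 0 < π K then fun F => π (F ∩ K) / π K else unanimity K

lemma lowEnv_FCPSet_eq [Nonempty Ω] (hH : IsPartition H) (h𝒜L : IsFieldOver H 𝒜L)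
    (h𝒜 : IsSetField 𝒜) (h𝒜L𝒜 : 𝒜L ⊆ 𝒜) (hπ : IsFAP 𝒜L π) (hσ : IsStrategy 𝒜 H σ)
    {F K : Set Ω} (hF : F ∈ 𝒜L) (hK : K ∈ 𝒜L) (hKne : K.Nonempty) :
    lowEnv (FCPSet 𝒜 𝒜L H π σ) F K = lowerCondPrior π K F := by
  obtain ⟨P₀, hP₀⟩ := FCPSet_nonempty hH h𝒜L h𝒜 h𝒜L𝒜 hπ hσ
  have hnonneg : ∀ P ∈ FCPSet 𝒜 𝒜L H π σ, 0 ≤ P F K := fun P hP =>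
    (hP.1.2.1 K (h𝒜L𝒜 hK) hKne).nonneg (h𝒜L𝒜 hF)
  by_cases hπK : 0 < π K
  · have hall : ∀ P ∈ FCPSet 𝒜 𝒜L H π σ, P F K = π (F ∩ K) / π K := by
      intro P hP
      rw [hP.1.apply_eq_div h𝒜 (h𝒜L𝒜 hF) (h𝒜L𝒜 hK) hKne (hP.2.1 K hK ▸ hπK),
        hP.2.1 _ (h𝒜L.1.inter_mem hF hK), hP.2.1 K hK]
    rw [lowerCondPrior, if_pos hπK]
    exact lowEnv_eq_of_mem_of_le ⟨P₀, hP₀, hall P₀ hP₀⟩ fun P hP => (hall P hP).ge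
  rw [lowerCondPrior, if_neg hπK, unanimity]
  split_ifs with hKF
  · have hall : ∀ P ∈ FCPSet 𝒜 𝒜L H π σ, P F K = 1 := fun P hP =>
      hP.1.apply_eq_one_of_subset h𝒜 (h𝒜L𝒜 hF) (h𝒜L𝒜 hK) hKne hKF
    exact lowEnv_eq_of_mem_of_le ⟨P₀, hP₀, hall P₀ hP₀⟩ fun P hP => (hall P hP).ge
  · have hπK0 : π K = 0 := le_antisymm (not_lt.1 hπK) (hπ.nonneg hK)
    exact lowEnv_eq_of_mem_of_le
      (exists_mem_FCPSet_apply_eq_zero hH h𝒜L h𝒜 h𝒜L𝒜 hπ hσ hF hK hπK0 hKF) hnonneg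

lemma isCapacity_and_totallyMonotone_lowerCondPrior (h𝒜L : IsSetField 𝒜L) (hπ : IsFAP 𝒜L π)
    {K : Set Ω} (hK : K ∈ 𝒜L) (hKne : K.Nonempty) :
    IsCapacity 𝒜L (lowerCondPrior π K) ∧ TotallyMonotone 𝒜L (lowerCondPrior π K) := by
  unfold lowerCondPrior
  split_ifs with hπK
  · exact ⟨(hπ.cond h𝒜L hK hπK).isCapacity h𝒜L, (hπ.cond h𝒜L hK hπK).totallyMonotone h𝒜L⟩
  · exact ⟨isCapacity_unanimity hKne, totallyMonotone_unanimity 𝒜L K⟩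

end LowerEnvelope

end

theorem statement13_general {Ω ι κ : Type*} [Nonempty Ω] (H : ι → Set Ω) (E : κ → Set Ω)
    (𝒜L 𝒜E 𝒜 : Set (Set Ω))
    (hH : IsPartition H)
    (h𝒜L : IsFieldOver H 𝒜L)
    (h𝒜 : IsJointField H E 𝒜L 𝒜E 𝒜)
    (π : Set Ω → ℝ) (hπ : IsFAP 𝒜L π)
    (σ : Set Ω → ι → ℝ) (hσ : IsStrategy 𝒜 H σ) :
    (∀ K ∈ 𝒜L, K.Nonempty →
      IsCapacity 𝒜L (fun B => lowEnv (FCPSet 𝒜 𝒜L H π σ) B K) ∧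
      TotallyMonotone 𝒜L (fun B => lowEnv (FCPSet 𝒜 𝒜L H π σ) B K)) ∧
    (∀ F ∈ 𝒜L, ∀ K ∈ 𝒜L, K.Nonempty →
      (F ∩ K = K → lowEnv (FCPSet 𝒜 𝒜L H π σ) F K = 1) ∧
      (F ∩ K ≠ K →
        (0 < π K → lowEnv (FCPSet 𝒜 𝒜L H π σ) F K = π (F ∩ K) / π K) ∧
        (π K = 0 → lowEnv (FCPSet 𝒜 𝒜L H π σ) F K = 0))) := by
  have hlow : ∀ F ∈ 𝒜L, ∀ K ∈ 𝒜L, K.Nonempty →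
      lowEnv (FCPSet 𝒜 𝒜L H π σ) F K = lowerCondPrior π K F :=
    fun F hF K hK hKne => lowEnv_FCPSet_eq hH h𝒜L h𝒜.1 h𝒜.2.1 hπ hσ hF hK hKne
  refine ⟨fun K hK hKne => ?_, fun F hF K hK hKne => ?_⟩
  · obtain ⟨hcap, htm⟩ := isCapacity_and_totallyMonotone_lowerCondPrior h𝒜L.1 hπ hK hKne
    exact ⟨hcap.congr h𝒜L.1 fun B hB => (hlow B hB K hK hKne).symm,
      htm.congr h𝒜L.1 fun B hB => (hlow B hB K hK hKne).symm⟩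
  rw [hlow F hF K hK hKne]
  refine ⟨fun hKF => ?_, fun hKF => ⟨fun hπK => ?_, fun hπK => ?_⟩⟩
  · by_cases hπK : 0 < π K
    · simp [lowerCondPrior, hπK, hKF, hπK.ne']
    · simp [lowerCondPrior, hπK, unanimity, inter_eq_right.1 hKF]
  · simp [lowerCondPrior, hπK]
  · simp [lowerCondPrior, hπK, unanimity, mt inter_eq_right.2 hKF]

/-- (i) for `K ∈ 𝒜L⁰` the lower envelope `π^p_*(·|K)` of the conditional
priors is a totally monotone capacity on `𝒜L`; (ii) its closed form. -/
theorem statement13 {Ω ι κ : Type*} [Nonempty Ω] (H : ι → Set Ω) (E : κ → Set Ω)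
    (𝒜L 𝒜E 𝒜 : Set (Set Ω))
    (hH : IsPartition H) (hE : IsPartition E)
    (h𝒜L : IsFieldOver H 𝒜L) (h𝒜E : IsFieldOver E 𝒜E)
    (h𝒜 : IsJointField H E 𝒜L 𝒜E 𝒜)
    (π : Set Ω → ℝ) (hπ : IsFAP 𝒜L π)
    (σ : Set Ω → ι → ℝ) (hσ : IsStrategy 𝒜 H σ) :
    (∀ K ∈ 𝒜L, K.Nonempty →
      IsCapacity 𝒜L (fun B => lowEnv (FCPSet 𝒜 𝒜L H π σ) B K) ∧
      TotallyMonotone 𝒜L (fun B => lowEnv (FCPSet 𝒜 𝒜L H π σ) B K)) ∧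
    (∀ F ∈ 𝒜L, ∀ K ∈ 𝒜L, K.Nonempty →
      (F ∩ K = K → lowEnv (FCPSet 𝒜 𝒜L H π σ) F K = 1) ∧
      (F ∩ K ≠ K →
        (0 < π K → lowEnv (FCPSet 𝒜 𝒜L H π σ) F K = π (F ∩ K) / π K) ∧
        (π K = 0 → lowEnv (FCPSet 𝒜 𝒜L H π σ) F K = 0))) :=
  statement13_general H E 𝒜L 𝒜E 𝒜 hH h𝒜L h𝒜 π hπ σ hσ
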